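/- arXiv:1607.04092 — 3 statements merged into one kernel-verified Lean document; each statement's English description precedes it below -/
import Mathlib

section
/- Let 0 < H < 1/2 and θ > 0. Define, for g in the class K₁ = {g ∈ L²(ℝ) : ‖g‖₂ = 1, g' ∈ L²(ℝ)}, the functional H_θ(g) = θ ∫_ℝ |𝓕(g²)(ξ)|² |ξ|^{1-2H} dξ − (1/2)∫_ℝ |g'(x)|² dx. Then 𝓔_θ := sup{H_θ(g) : g ∈ K₁} is finite. -/
/-!
Write `F = 𝓕(g²)`. Since `‖g‖₂ = 1`, `|F| ≤ ‖g²‖₁ = 1`, and since `(g²)' = 2gg'`,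
Cauchy–Schwarz gives `|ξ| |F(ξ)| ≤ ‖2gg'‖₁ ≤ 2‖g'‖₂`. Splitting the weighted integral at `|ξ| = R`
therefore bounds it by `c R^{2-2H} + 4 ‖g'‖₂² R^{-2H} / H`; for `R` large enough the second term,
multiplied by `θ`, is at most `‖g'‖₂² / 2` and is absorbed by the kinetic term.
-/

open MeasureTheory Real Set
open scoped FourierTransform

section L2

variable {α E : Type*} [MeasurableSpace α] {μ : Measure α} [NormedAddCommGroup E] {f g : α → E}

lemma MeasureTheory.MemLp.integral_norm_sq_eq (hf : MemLp f 2 μ) :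
    ∫ a, ‖f a‖ ^ 2 ∂μ = (eLpNorm f 2 μ).toReal ^ 2 := by
  rw [hf.eLpNorm_eq_integral_rpow_norm two_ne_zero ENNReal.ofNat_ne_top,
    ENNReal.toReal_ofReal (by positivity), ENNReal.toReal_ofNat, ← rpow_natCast,
    ← rpow_mul (integral_nonneg fun _ => by positivity)]
  norm_num

lemma integral_norm_mul_le_sqrt_mul_sqrt (hf : MemLp f 2 μ) (hg : MemLp g 2 μ) :
    ∫ a, ‖f a‖ * ‖g a‖ ∂μ ≤ √(∫ a, ‖f a‖ ^ 2 ∂μ) * √(∫ a, ‖g a‖ ^ 2 ∂μ) := by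
  simpa [sqrt_eq_rpow] using
    integral_mul_norm_le_Lp_mul_Lq HolderConjugate.two_two (by simpa using hf) (by simpa using hg)

end L2

lemma integral_exp_mul_eq_fourier (w : ℝ → ℂ) (ξ : ℝ) :
    ∫ x : ℝ, Complex.exp (-(Complex.I * ξ * x)) * w x = 𝓕 w (ξ / (2 * π)) := by
  rw [Real.fourier_real_eq_integral_exp_smul]
  congr 1 with x
  rw [smul_eq_mul]
  congr 2
  push_cast
  field_simp

lemma norm_integral_exp_mul_le (w : ℝ → ℂ) (ξ : ℝ) :
    ‖∫ x : ℝ, Complex.exp (-(Complex.I * ξ * x)) * w x‖ ≤ ∫ x, ‖w x‖ :=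
  (norm_integral_le_integral_norm _).trans_eq <| by
    congr 1 with x
    simp [Complex.norm_exp]

lemma abs_mul_norm_integral_exp_mul_le {w w' : ℝ → ℂ} (hw : Integrable w)
    (hd : ∀ x, HasDerivAt w (w' x) x) (hw' : Integrable w') (ξ : ℝ) :
    |ξ| * ‖∫ x : ℝ, Complex.exp (-(Complex.I * ξ * x)) * w x‖ ≤ ∫ x, ‖w' x‖ := by
  have hderiv : deriv w = w' := funext fun x => (hd x).deriv
  have key := congrFun (Real.fourier_deriv hw (fun x => (hd x).differentiableAt)
    (hderiv ▸ hw')) (ξ / (2 * π))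
  rw [hderiv] at key
  calc |ξ| * ‖∫ x : ℝ, Complex.exp (-(Complex.I * ξ * x)) * w x‖
      = ‖∫ x : ℝ, Complex.exp (-(Complex.I * ξ * x)) * w' x‖ := by
        have hscalar : (2 * π * Complex.I * ↑(ξ / (2 * π)) : ℂ) = Complex.I * ξ := by
          push_cast
          field_simp
        rw [integral_exp_mul_eq_fourier, integral_exp_mul_eq_fourier, key, hscalar, norm_smul,
          norm_mul, Complex.norm_I, Complex.norm_real, one_mul, norm_eq_abs]
    _ ≤ ∫ x, ‖w' x‖ := norm_integral_exp_mul_le w' ξ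

lemma integrable_comp_abs_of_integrableOn_Ioi {f : ℝ → ℝ} (hf : IntegrableOn f (Ioi 0)) :
    Integrable (fun x => f |x|) := by
  have hpos : IntegrableOn (fun x => f |x|) (Ioi 0) :=
    hf.congr_fun (fun x (hx : 0 < x) => by rw [abs_of_pos hx]) measurableSet_Ioi
  have hneg : IntegrableOn (fun x => f |x|) (Iic 0) := by
    have hm : MeasurableEmbedding fun x : ℝ => -x := (Homeomorph.neg ℝ).measurableEmbedding
    rw [← Measure.map_neg_eq_self (volume : Measure ℝ), hm.integrableOn_map_iff]
    simp_rw [Function.comp_def, abs_neg, neg_preimage, neg_Iic, neg_zero]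
    exact Iff.mpr integrableOn_Ici_iff_integrableOn_Ioi hpos
  simpa using hneg.union hpos

section PiecewisePower

variable {a b R : ℝ} (c₁ c₂ : ℝ)

lemma integrableOn_Ioi_piecewise_rpow (ha : -1 < a) (hb : b < -1) (hR : 0 < R) :
    IntegrableOn (fun t => if t ≤ R then c₁ * t ^ a else c₂ * t ^ b) (Ioi 0) := by
  have hlow : IntegrableOn (fun t => if t ≤ R then c₁ * t ^ a else c₂ * t ^ b) (Ioc 0 R) :=
    IntegrableOn.congr_fun ((intervalIntegral.intervalIntegrable_rpow' ha).1.const_mul c₁)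
      (fun t ht => by simp [ht.2]) measurableSet_Ioc
  have hhigh : IntegrableOn (fun t => if t ≤ R then c₁ * t ^ a else c₂ * t ^ b) (Ioi R) :=
    IntegrableOn.congr_fun ((integrableOn_Ioi_rpow_of_lt hb hR).const_mul c₂)
      (fun t (ht : R < t) => by simp [not_le.mpr ht]) measurableSet_Ioi
  simpa [Ioc_union_Ioi_eq_Ioi hR.le] using hlow.union hhigh

lemma integral_Ioi_piecewise_rpow (ha : -1 < a) (hb : b < -1) (hR : 0 < R) :
    ∫ t in Ioi 0, (if t ≤ R then c₁ * t ^ a else c₂ * t ^ b)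
      = c₁ * R ^ (a + 1) / (a + 1) - c₂ * R ^ (b + 1) / (b + 1) := by
  have hint := integrableOn_Ioi_piecewise_rpow c₁ c₂ ha hb hR
  rw [← Ioc_union_Ioi_eq_Ioi hR.le, setIntegral_union (Ioc_disjoint_Ioi le_rfl) measurableSet_Ioi
    (hint.mono_set Ioc_subset_Ioi_self) (hint.mono_set (Ioi_subset_Ioi hR.le))]
  have hlow : ∫ t in Ioc 0 R, (if t ≤ R then c₁ * t ^ a else c₂ * t ^ b)
      = c₁ * R ^ (a + 1) / (a + 1) := by
    rw [setIntegral_congr_fun measurableSet_Ioc (fun t ht => if_pos ht.2), integral_const_mul,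
      ← intervalIntegral.integral_of_le hR.le, integral_rpow (Or.inl ha),
      zero_rpow (by linarith), sub_zero, mul_div_assoc]
  have hhigh : ∫ t in Ioi R, (if t ≤ R then c₁ * t ^ a else c₂ * t ^ b)
      = -(c₂ * R ^ (b + 1) / (b + 1)) := by
    rw [setIntegral_congr_fun measurableSet_Ioi (fun t (ht : R < t) => if_neg (not_le.mpr ht)),
      integral_const_mul, integral_Ioi_rpow_of_lt hb hR]
    ring
  rw [hlow, hhigh, sub_eq_add_neg]

end PiecewisePower

lemma sq_mul_rpow_le_piecewise {x s A K a R : ℝ} (hR : 0 < R) (hs : 0 ≤ s) (hx : 0 ≤ x)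
    (hA : x ≤ A) (hK : s * x ≤ K) :
    x ^ 2 * s ^ a ≤ if s ≤ R then A ^ 2 * s ^ a else K ^ 2 * s ^ (a - 2) := by
  split_ifs with hsR
  · gcongr
  · have hs0 : 0 < s := hR.trans (not_le.mp hsR)
    have hsplit : s ^ a = s ^ 2 * s ^ (a - 2) := by
      rw [← rpow_two, ← rpow_add hs0, add_sub_cancel]
    calc x ^ 2 * s ^ a = (s * x) ^ 2 * s ^ (a - 2) := by
          rw [hsplit]
          ring
      _ ≤ K ^ 2 * s ^ (a - 2) := by gcongr

lemma integral_sq_mul_rpow_le_of_le_of_abs_mul_le {f : ℝ → ℝ} {A K a R : ℝ}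
    (ha : -1 < a) (ha' : a < 1) (hR : 0 < R)
    (hf : ∀ ξ, 0 ≤ f ξ) (hA : ∀ ξ, f ξ ≤ A) (hK : ∀ ξ, |ξ| * f ξ ≤ K) :
    ∫ ξ, f ξ ^ 2 * |ξ| ^ a
      ≤ 2 * (A ^ 2 * R ^ (a + 1) / (a + 1) + K ^ 2 * R ^ (a - 1) / (1 - a)) := by
  set φ : ℝ → ℝ := fun t => if t ≤ R then A ^ 2 * t ^ a else K ^ 2 * t ^ (a - 2)
  have hφ : IntegrableOn φ (Ioi 0) :=
    integrableOn_Ioi_piecewise_rpow _ _ ha (by linarith) hR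
  calc ∫ ξ, f ξ ^ 2 * |ξ| ^ a ≤ ∫ ξ, φ |ξ| :=
        integral_mono_of_nonneg (.of_forall fun ξ => by positivity)
          (integrable_comp_abs_of_integrableOn_Ioi hφ)
          (.of_forall fun ξ => sq_mul_rpow_le_piecewise hR (abs_nonneg ξ) (hf ξ) (hA ξ) (hK ξ))
    _ = 2 * (A ^ 2 * R ^ (a + 1) / (a + 1) + K ^ 2 * R ^ (a - 1) / (1 - a)) := by
        rw [integral_comp_abs, integral_Ioi_piecewise_rpow _ _ ha (by linarith) hR,
          show a - 2 + 1 = a - 1 by ring]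
        have : a - 1 ≠ 0 := by linarith
        have : 1 - a ≠ 0 := by linarith
        field_simp
        ring

lemma norm_integral_exp_mul_sq_le (g : ℝ → ℝ) (ξ : ℝ) :
    ‖∫ x : ℝ, Complex.exp (-(Complex.I * ξ * x)) * (g x : ℂ) ^ 2‖ ≤ ∫ x, g x ^ 2 :=
  (norm_integral_exp_mul_le _ ξ).trans_eq <| by
    congr 1 with x
    simp

lemma abs_mul_norm_integral_exp_mul_sq_le {g g' : ℝ → ℝ} (hg : MemLp g 2 volume)
    (hg' : MemLp g' 2 volume) (hd : ∀ x, HasDerivAt g (g' x) x) (ξ : ℝ) :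
    |ξ| * ‖∫ x : ℝ, Complex.exp (-(Complex.I * ξ * x)) * (g x : ℂ) ^ 2‖
      ≤ 2 * (√(∫ x, g x ^ 2) * √(∫ x, g' x ^ 2)) := by
  have hsq : ∀ x, HasDerivAt (fun y => (g y : ℂ) ^ 2) (2 * (g x : ℂ) * g' x) x := fun x => by
    simpa using (hd x).ofReal_comp.fun_pow 2
  have hint : Integrable (fun x => (g x : ℂ) ^ 2) := by
    simpa using hg.integrable_sq.ofReal (𝕜 := ℂ)
  have hint' : Integrable (fun x => 2 * (g x : ℂ) * g' x) := by
    simpa [mul_assoc] using ((hg.integrable_mul hg').ofReal (𝕜 := ℂ)).const_mul 2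
  calc _ ≤ ∫ x, ‖2 * (g x : ℂ) * g' x‖ := abs_mul_norm_integral_exp_mul_le hint hsq hint' ξ
    _ = 2 * ∫ x, ‖g x‖ * ‖g' x‖ := by
        rw [← integral_const_mul]
        simp [mul_assoc]
    _ ≤ 2 * (√(∫ x, g x ^ 2) * √(∫ x, g' x ^ 2)) := by
        gcongr
        simpa using integral_norm_mul_le_sqrt_mul_sqrt hg hg'

/-- For `0 < H < 1/2` and `θ > 0`, the variational quantity
`H_θ(g) = θ ∫ |𝓕(g²)(ξ)|² |ξ|^(1-2H) dξ - (1/2) ∫ |g'|²` is bounded above over the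
class `K₁ = {g ∈ L² : ‖g‖₂ = 1, g' ∈ L²}`, i.e. `𝓔_θ = sup H_θ < ∞`. -/
theorem stmt3 (H θ : ℝ) (hH : 0 < H) (hH' : H < 1/2) (hθ : 0 < θ) :
    ∃ C : ℝ, ∀ g g' : ℝ → ℝ, MemLp g 2 (volume : Measure ℝ) →
      eLpNorm g 2 volume = 1 →
      (∀ x, HasDerivAt g (g' x) x) → MemLp g' 2 volume →
      θ * (∫ ξ : ℝ, ‖∫ x : ℝ, Complex.exp (-(Complex.I * ξ * x)) * ((g x : ℂ)) ^ 2‖ ^ 2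
            * |ξ| ^ (1 - 2 * H))
        - (1/2) * (∫ x : ℝ, (g' x) ^ 2) ≤ C := by
  -- `R` is chosen so that `4θ / (H R^{2H}) = 1/2`.
  obtain ⟨R, hR, hRH⟩ : ∃ R : ℝ, 0 < R ∧ R ^ (1 - 2 * H - 1) = H / (8 * θ) := by
    refine ⟨(H / (8 * θ)) ^ (-(2 * H))⁻¹, by positivity, ?_⟩
    rw [← rpow_mul (by positivity), show 1 - 2 * H - 1 = -(2 * H) by ring,
      inv_mul_cancel₀ (by linarith), rpow_one]
  refine ⟨θ * (2 * (R ^ (1 - 2 * H + 1) / (1 - 2 * H + 1))), fun g g' hg hnorm hd hg' => ?_⟩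
  set N := ∫ x, g' x ^ 2
  have hg1 : ∫ x, g x ^ 2 = 1 := by simpa [hnorm] using hg.integral_norm_sq_eq
  have hlow (ξ : ℝ) := (norm_integral_exp_mul_sq_le g ξ).trans hg1.le
  have hhigh (ξ : ℝ) : |ξ| * ‖∫ x : ℝ, Complex.exp (-(Complex.I * ξ * x)) * (g x : ℂ) ^ 2‖
      ≤ 2 * √N := by
    simpa [hg1] using abs_mul_norm_integral_exp_mul_sq_le hg hg' hd ξ
  calc _ ≤ θ * (2 * (1 ^ 2 * R ^ (1 - 2 * H + 1) / (1 - 2 * H + 1)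
          + (2 * √N) ^ 2 * R ^ (1 - 2 * H - 1) / (1 - (1 - 2 * H)))) - 1 / 2 * N := by
        gcongr
        exact integral_sq_mul_rpow_le_of_le_of_abs_mul_le (by linarith) (by linarith) hR
          (fun ξ => norm_nonneg _) hlow hhigh
    _ = θ * (2 * (R ^ (1 - 2 * H + 1) / (1 - 2 * H + 1))) := by
        rw [hRH, mul_pow, sq_sqrt (integral_nonneg fun x => sq_nonneg _)]
        field_simp
        ring
end

section
/- For any α ∈ (0,1), sup_{β ≥ 1} ∫_ℝ |ξ|^α |∫_{−β}^{β} e^{i x ξ − x²/2} dx|² dξ < ∞. -/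
/-!
Write `φ_ξ(x) = e^{ixξ - x²/2}` and `F_β(ξ) = ∫_{-β}^{β} φ_ξ`. Since `φ_ξ' = (iξ - x) φ_ξ`, the
fundamental theorem of calculus gives `iξ F_β(ξ) = φ_ξ(β) - φ_ξ(-β) + ∫_{-β}^{β} x φ_ξ(x) dx`,
so `|ξ| |F_β(ξ)| ≤ 1 + 1 + ∫ |x| e^{-x²/2} ≤ 4` uniformly in `β`. Together with the trivial bound
`|F_β(ξ)| ≤ √(2π) ≤ 4` this gives `|F_β(ξ)| ≤ 8 / (1 + |ξ|)`, so the integrand is dominated by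
`64 (1 + |ξ|)^{α - 2}`, which is integrable on `ℝ` because `2 - α > 1`.
-/

open MeasureTheory Real Set

noncomputable def gaussianWavePacket (ξ x : ℝ) : ℂ :=
  Complex.exp (Complex.I * x * ξ - x ^ 2 / 2)

@[fun_prop]
lemma continuous_gaussianWavePacket (ξ : ℝ) : Continuous (gaussianWavePacket ξ) := by
  unfold gaussianWavePacket; fun_prop

lemma norm_gaussianWavePacket (ξ x : ℝ) : ‖gaussianWavePacket ξ x‖ = Real.exp (-x ^ 2 / 2) := by
  rw [gaussianWavePacket, Complex.norm_exp]
  congr 1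
  simp [← Complex.ofReal_pow, neg_div]

lemma hasDerivAt_gaussianWavePacket (ξ x : ℝ) :
    HasDerivAt (gaussianWavePacket ξ) ((Complex.I * ξ - x) * gaussianWavePacket ξ x) x := by
  have h : HasDerivAt (fun z : ℂ => Complex.I * z * ξ - z ^ 2 / 2) (Complex.I * ξ - x) x :=
    ((((hasDerivAt_id (x : ℂ)).const_mul Complex.I).mul_const (ξ : ℂ)).sub
      ((hasDerivAt_pow 2 (x : ℂ)).div_const 2)).congr_deriv (by norm_num)
  exact (h.cexp.comp_ofReal (z := x)).congr_deriv (mul_comm _ _)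

lemma I_mul_intervalIntegral_gaussianWavePacket (ξ a b : ℝ) :
    Complex.I * ξ * ∫ x in a..b, gaussianWavePacket ξ x =
      gaussianWavePacket ξ b - gaussianWavePacket ξ a + ∫ x in a..b, x * gaussianWavePacket ξ x := by
  have hint : ∀ c : ℂ, IntervalIntegrable (fun x : ℝ => c * gaussianWavePacket ξ x) volume a b :=
    fun c => (continuous_const.mul (continuous_gaussianWavePacket ξ)).intervalIntegrable a b
  have hxint : IntervalIntegrable (fun x : ℝ => (x : ℂ) * gaussianWavePacket ξ x) volume a b :=
    (by fun_prop : Continuous fun x : ℝ => (x : ℂ) * gaussianWavePacket ξ x).intervalIntegrable a b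
  have hftc := intervalIntegral.integral_eq_sub_of_hasDerivAt
    (fun x _ => hasDerivAt_gaussianWavePacket ξ x)
    (by simpa only [sub_mul] using (hint (Complex.I * ξ)).sub hxint)
  simp only [sub_mul] at hftc
  rw [intervalIntegral.integral_sub (hint _) hxint, intervalIntegral.integral_const_mul] at hftc
  rw [← hftc]
  ring

lemma integral_abs_mul_exp_neg_sq_div_two {β : ℝ} (hβ : 0 ≤ β) :
    ∫ x in (-β)..β, |x| * Real.exp (-x ^ 2 / 2) = 2 * (1 - Real.exp (-β ^ 2 / 2)) := by
  set f : ℝ → ℝ := fun x => |x| * Real.exp (-x ^ 2 / 2)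
  have hf : Continuous f := by fun_prop
  have heven : ∫ x in (-β)..0, f x = ∫ x in 0..β, f x := by
    simpa [f] using (intervalIntegral.integral_comp_neg (a := 0) (b := β) f).symm
  have hpos : ∫ x in 0..β, f x = 1 - Real.exp (-β ^ 2 / 2) := by
    have hderiv : ∀ x ∈ uIcc 0 β,
        HasDerivAt (fun y => -Real.exp (-y ^ 2 / 2)) (x * Real.exp (-x ^ 2 / 2)) x := by
      intro x _
      exact (((hasDerivAt_pow 2 x).neg.div_const 2).exp).neg.congr_deriv (by simp only [Pi.neg_apply]; ring)
    rw [intervalIntegral.integral_congr (g := fun x => x * Real.exp (-x ^ 2 / 2)),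
      intervalIntegral.integral_eq_sub_of_hasDerivAt hderiv
        ((by fun_prop : Continuous fun x : ℝ => x * Real.exp (-x ^ 2 / 2)).intervalIntegrable _ _)]
    · norm_num; ring
    · intro x hx
      rw [uIcc_of_le hβ] at hx
      simp [f, abs_of_nonneg hx.1]
  rw [← intervalIntegral.integral_add_adjacent_intervals (b := 0) (hf.intervalIntegrable _ _)
    (hf.intervalIntegrable _ _), heven, hpos]
  ring

lemma abs_mul_norm_intervalIntegral_gaussianWavePacket_le {β : ℝ} (hβ : 0 ≤ β) (ξ : ℝ) :
    |ξ| * ‖∫ x in (-β)..β, gaussianWavePacket ξ x‖ ≤ 4 := by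
  have hexp_le_one : ∀ x : ℝ, Real.exp (-x ^ 2 / 2) ≤ 1 := fun x => by
    rw [Real.exp_le_one_iff]; nlinarith [sq_nonneg x]
  have hmoment : ‖∫ x in (-β)..β, (x : ℂ) * gaussianWavePacket ξ x‖ ≤ 2 := by
    refine (intervalIntegral.norm_integral_le_integral_norm (by linarith)).trans ?_
    simp only [norm_mul, Complex.norm_real, Real.norm_eq_abs, norm_gaussianWavePacket]
    rw [integral_abs_mul_exp_neg_sq_div_two hβ]
    linarith [Real.exp_pos (-β ^ 2 / 2)]
  calc |ξ| * ‖∫ x in (-β)..β, gaussianWavePacket ξ x‖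
      = ‖Complex.I * ξ * ∫ x in (-β)..β, gaussianWavePacket ξ x‖ := by simp
    _ ≤ ‖gaussianWavePacket ξ β‖ + ‖gaussianWavePacket ξ (-β)‖
          + ‖∫ x in (-β)..β, (x : ℂ) * gaussianWavePacket ξ x‖ := by
        rw [I_mul_intervalIntegral_gaussianWavePacket]
        exact (norm_add_le _ _).trans (by gcongr; exact norm_sub_le _ _)
    _ ≤ 1 + 1 + 2 := by
        simp only [norm_gaussianWavePacket]
        gcongr <;> apply hexp_le_one
    _ = 4 := by norm_num

lemma norm_setIntegral_gaussianWavePacket_le (s : Set ℝ) (ξ : ℝ) :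
    ‖∫ x in s, gaussianWavePacket ξ x‖ ≤ √(2 * π) := by
  have hgauss : Integrable fun x : ℝ => Real.exp (-(1 / 2) * x ^ 2) :=
    integrable_exp_neg_mul_sq (by norm_num)
  calc ‖∫ x in s, gaussianWavePacket ξ x‖
      ≤ ∫ x in s, Real.exp (-(1 / 2) * x ^ 2) := by
        refine (norm_integral_le_integral_norm _).trans (le_of_eq ?_)
        simp only [norm_gaussianWavePacket]
        ring_nf
    _ ≤ ∫ x, Real.exp (-(1 / 2) * x ^ 2) :=
        setIntegral_le_integral hgauss (Filter.Eventually.of_forall fun x => (Real.exp_pos _).le)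
    _ = √(2 * π) := by rw [integral_gaussian]; norm_num [div_div_eq_mul_div, mul_comm]

lemma one_add_abs_mul_norm_integral_Icc_gaussianWavePacket_le {β : ℝ} (hβ : 0 ≤ β) (ξ : ℝ) :
    (1 + |ξ|) * ‖∫ x in Icc (-β) β, gaussianWavePacket ξ x‖ ≤ 8 := by
  have hsmall : ‖∫ x in Icc (-β) β, gaussianWavePacket ξ x‖ ≤ 4 := by
    refine (norm_setIntegral_gaussianWavePacket_le _ ξ).trans ?_
    rw [show (4 : ℝ) = √(4 ^ 2) by simp]
    exact Real.sqrt_le_sqrt (by nlinarith [Real.pi_lt_four])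
  have hlarge := abs_mul_norm_intervalIntegral_gaussianWavePacket_le hβ ξ
  rw [intervalIntegral.integral_of_le (by linarith), ← integral_Icc_eq_integral_Ioc] at hlarge
  linarith [add_mul 1 |ξ| ‖∫ x in Icc (-β) β, gaussianWavePacket ξ x‖]

lemma rpow_mul_sq_le_of_one_add_mul_le {α t y M : ℝ} (hα : 0 ≤ α) (ht : 0 ≤ t) (hy : 0 ≤ y)
    (h : (1 + t) * y ≤ M) : t ^ α * y ^ 2 ≤ M ^ 2 * (1 + t) ^ (-(2 - α)) := by
  have h1t : 0 < 1 + t := by linarith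
  have hsplit : (1 + t) ^ α = (1 + t) ^ (-(2 - α)) * (1 + t) ^ 2 := by
    rw [← Real.rpow_natCast, ← Real.rpow_add h1t]; norm_num
  calc t ^ α * y ^ 2 ≤ (1 + t) ^ α * y ^ 2 := by gcongr; linarith
    _ = (1 + t) ^ (-(2 - α)) * ((1 + t) * y) ^ 2 := by rw [hsplit]; ring
    _ ≤ (1 + t) ^ (-(2 - α)) * M ^ 2 := by gcongr
    _ = M ^ 2 * (1 + t) ^ (-(2 - α)) := mul_comm _ _

/-- For `α ∈ (0,1)`, `sup_{β ≥ 1} ∫ |ξ|^α |∫_{-β}^β e^{ixξ - x²/2} dx|² dξ < ∞`. -/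
theorem stmt14 (α : ℝ) (hα : 0 < α) (hα' : α < 1) :
    ∃ C : ℝ, ∀ β : ℝ, 1 ≤ β →
      (∫ ξ : ℝ, |ξ| ^ α *
        ‖∫ x in Set.Icc (-β) β,
            Complex.exp (Complex.I * (x : ℂ) * (ξ : ℂ) - (x : ℂ) ^ 2 / 2)‖ ^ 2) ≤ C := by
  have hmajorant : Integrable fun ξ : ℝ => (8 : ℝ) ^ 2 * (1 + |ξ|) ^ (-(2 - α)) :=
    (integrable_one_add_norm (E := ℝ) (μ := volume) (by norm_num; linarith)).const_mul _
  refine ⟨∫ ξ : ℝ, (8 : ℝ) ^ 2 * (1 + |ξ|) ^ (-(2 - α)), fun β hβ => ?_⟩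
  refine integral_mono_of_nonneg (Filter.Eventually.of_forall fun ξ => by positivity) hmajorant
    (Filter.Eventually.of_forall fun ξ => ?_)
  exact rpow_mul_sq_le_of_one_add_mul_le hα.le (abs_nonneg ξ) (norm_nonneg _)
    (one_add_abs_mul_norm_integral_Icc_gaussianWavePacket_le (by linarith) ξ)
end

section
/- Let 0 < s < t, η ≠ 0, β ≥ 1, and define ρ^{(β)}(s,t;η) = (2π(t−s))^{-1/2} ∫_{−β√t}^{β√t} e^{−ixη − x²/(2(t−s))} dx. Then there is a constant C (independent of s, t, η, β) such that for every θ ∈ [0,1], |ρ^{(β)}(s,t;η) − e^{−(t−s)η²/2}| ≤ C |η|^{−θ} (t−s)^{−θ/2} e^{−β²θ/2}. -/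
/-!
Write `σ = t - s` and `a = β √t`. Fourier's formula for the Gaussian gives the untruncated
integral `√(2πσ) e^{-ση²/2}`, so the error is `(2πσ)^{-1/2}` times the two tail integrals over
`|x| > a`. The error is at most `2`, as both terms have modulus at most `1`. Integrating each tail
by parts against `e^{-ixη}` bounds it by `2 e^{-a²/(2σ)} / |η| ≤ 2 e^{-β²/2} / |η|`, using
`a² / σ = β² t / (t - s) ≥ β²`. Hence the error is at most `4` and at most `4X`, with
`X = |η|⁻¹ σ^{-1/2} e^{-β²/2}`; since `X^θ` lies between `1` and `X`, it is at most `4 X^θ`.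
-/

open MeasureTheory Set Filter Topology Complex
open scoped Real

theorem norm_setIntegral_Ioi_mul_cexp_le {h h' : ℝ → ℝ} {a : ℝ} {η : ℝ} (hη : η ≠ 0)
    (hderiv : ∀ x ∈ Ici a, HasDerivAt h (h' x) x) (hh' : ∀ x ∈ Ioi a, h' x ≤ 0)
    (hlim : Tendsto h atTop (𝓝 0))
    (hint : IntegrableOn (fun x : ℝ => (h x : ℂ) * cexp (I * η * x)) (Ioi a)) :
    ‖∫ x in Ioi a, (h x : ℂ) * cexp (I * η * x)‖ ≤ 2 * h a / |η| := by
  set e : ℝ → ℂ := fun x => cexp (I * η * x)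
  have hη' : (η : ℂ) ≠ 0 := ofReal_ne_zero.mpr hη
  have hnorm_e (x : ℝ) : ‖e x‖ = 1 := by simp [e, Complex.norm_exp]
  have hh'_int : IntegrableOn h' (Ioi a) := by
    simpa using (integrableOn_Ioi_deriv_of_nonneg' (fun x hx => (hderiv x hx).neg)
      (fun x hx => neg_nonneg.mpr (hh' x hx)) hlim.neg).neg
  have hh'_integral : ∫ x in Ioi a, h' x = -h a := by
    simpa using integral_Ioi_of_hasDerivAt_of_tendsto' hderiv hh'_int hlim
  have hha : 0 ≤ h a := by
    have := setIntegral_nonpos (μ := volume) measurableSet_Ioi hh'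
    linarith
  have hF (x : ℝ) (hx : x ∈ Ici a) : HasDerivAt (fun y : ℝ => (h y : ℂ) * e y / (I * η))
      ((h x : ℂ) * e x + (h' x : ℂ) * e x / (I * η)) x := by
    have he : HasDerivAt e (e x * (I * η)) x := by
      simpa using ((hasDerivAt_id (x : ℂ)).const_mul (I * η)).cexp.comp_ofReal
    refine (((hderiv x hx).ofReal_comp.mul he).div_const (I * η)).congr_deriv ?_
    field_simp
    ring
  have hF_lim : Tendsto (fun y : ℝ => (h y : ℂ) * e y / (I * η)) atTop (𝓝 0) := by
    refine squeeze_zero_norm (fun y => le_of_eq ?_) (by simpa using hlim.norm.div_const |η|)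
    simp [hnorm_e]
  have hrem_int : IntegrableOn (fun x => (h' x : ℂ) * e x / (I * η)) (Ioi a) := by
    refine (hh'_int.ofReal.mul_bdd (c := 1) (by fun_prop) ?_).div_const _
    exact .of_forall fun x => (hnorm_e x).le
  -- `h e = (h e / (iη))' - h' e / (iη)`, and `|h'| = -h'` integrates to `h a`.
  have hparts : ∫ x in Ioi a, (h x : ℂ) * e x
      = -((h a : ℂ) * e a / (I * η)) - ∫ x in Ioi a, (h' x : ℂ) * e x / (I * η) := by
    rw [eq_sub_iff_add_eq, ← integral_add hint hrem_int,
      integral_Ioi_of_hasDerivAt_of_tendsto' hF (hint.add hrem_int) hF_lim, zero_sub]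
  have hrem_le : ‖∫ x in Ioi a, (h' x : ℂ) * e x / (I * η)‖ ≤ h a / |η| := by
    calc _ ≤ ∫ x in Ioi a, -h' x / |η| := by
          refine norm_integral_le_of_norm_le (hh'_int.neg.div_const _) ?_
          filter_upwards [ae_restrict_mem measurableSet_Ioi] with x hx
          simp [hnorm_e, abs_of_nonpos (hh' x hx)]
      _ = h a / |η| := by rw [integral_div, integral_neg, hh'_integral, neg_neg]
  calc _ ≤ ‖(h a : ℂ) * e a / (I * η)‖ + ‖∫ x in Ioi a, (h' x : ℂ) * e x / (I * η)‖ := by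
        rw [hparts, ← norm_neg ((h a : ℂ) * e a / (I * η))]
        exact norm_sub_le _ _
    _ ≤ h a / |η| + h a / |η| := by
        gcongr
        simp [hnorm_e, abs_of_nonneg hha]
    _ = 2 * h a / |η| := by ring

theorem setIntegral_Icc_sub_integral {E : Type*} [NormedAddCommGroup E] [NormedSpace ℝ E]
    {f : ℝ → E} (hf : Integrable f) {a b : ℝ} (hab : a ≤ b) :
    (∫ x in Icc a b, f x) - ∫ x, f x = -((∫ x in Iic a, f x) + ∫ x in Ioi b, f x) := by
  have hIoc := intervalIntegral.integral_Iic_sub_Iic (hf.integrableOn (s := Iic a))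
    (hf.integrableOn (s := Iic b))
  have hsplit := intervalIntegral.integral_Iic_add_Ioi (hf.integrableOn (s := Iic b))
    hf.integrableOn
  rw [integral_Icc_eq_integral_Ioc, ← intervalIntegral.integral_of_le hab, ← hIoc, ← hsplit]
  abel

theorem le_mul_rpow_of_le_of_le_mul {E C X θ : ℝ} (hC : 0 ≤ C) (hX : 0 ≤ X) (hEC : E ≤ C)
    (hECX : E ≤ C * X) (hθ : θ ∈ Icc (0 : ℝ) 1) : E ≤ C * X ^ θ := by
  rcases le_total X 1 with hX1 | hX1
  · exact hECX.trans (mul_le_mul_of_nonneg_left (Real.self_le_rpow_of_le_one hX hX1 hθ.2) hC)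
  · exact hEC.trans (le_mul_of_one_le_right hC (Real.one_le_rpow hX1 hθ.1))

noncomputable def gaussFourierIntegrand (σ η x : ℝ) : ℂ :=
  cexp (-(I * x * η) - (x : ℂ) ^ 2 / (2 * σ))

section
variable {σ : ℝ}

theorem gaussFourierIntegrand_eq (σ η x : ℝ) :
    gaussFourierIntegrand σ η x = (rexp (-(x ^ 2 / (2 * σ))) : ℂ) * cexp (I * ↑(-η) * x) := by
  rw [ofReal_exp, ← Complex.exp_add, gaussFourierIntegrand]
  push_cast
  ring_nf

theorem norm_gaussFourierIntegrand (σ η x : ℝ) :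
    ‖gaussFourierIntegrand σ η x‖ = rexp (-(x ^ 2 / (2 * σ))) := by
  rw [gaussFourierIntegrand_eq, norm_mul, norm_real, Complex.norm_exp]
  simp

theorem gaussFourierIntegrand_neg (σ η x : ℝ) :
    gaussFourierIntegrand σ η (-x) = gaussFourierIntegrand σ (-η) x := by
  simp only [gaussFourierIntegrand, ofReal_neg]
  ring_nf

theorem integral_gaussFourierIntegrand (hσ : 0 < σ) (η : ℝ) :
    ∫ x, gaussFourierIntegrand σ η x = √(2 * π * σ) * rexp (-(σ * η ^ 2 / 2)) := by
  have hb : 0 < (((2 * σ)⁻¹ : ℝ) : ℂ).re := by simp [hσ]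
  have hσ' : (σ : ℂ) ≠ 0 := ofReal_ne_zero.mpr hσ.ne'
  have h (x : ℝ) : gaussFourierIntegrand σ η x
      = cexp (I * ↑(-η) * x) * cexp (-(((2 * σ)⁻¹ : ℝ) : ℂ) * (x : ℂ) ^ 2) := by
    rw [gaussFourierIntegrand, ← Complex.exp_add]
    push_cast
    field_simp
    ring_nf
  simp_rw [h, fourierIntegral_gaussian hb]
  have hπσ : (π : ℂ) / (((2 * σ)⁻¹ : ℝ) : ℂ) = ((2 * π * σ : ℝ) : ℂ) := by
    push_cast
    field_simp
  rw [hπσ, Real.sqrt_eq_rpow, ofReal_cpow (by positivity), ofReal_exp]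
  push_cast
  congr 2
  field_simp
  ring

theorem integrable_gaussFourierIntegrand (hσ : 0 < σ) (η : ℝ) :
    Integrable (gaussFourierIntegrand σ η) := by
  have hb : 0 < (((2 * σ)⁻¹ : ℝ) : ℂ).re := by simp [hσ]
  refine (integrable_cexp_quadratic hb (-(I * η)) 0).congr (.of_forall fun x => ?_)
  have hσ' : (σ : ℂ) ≠ 0 := ofReal_ne_zero.mpr hσ.ne'
  rw [gaussFourierIntegrand]
  refine congrArg cexp ?_
  push_cast
  field_simp
  ring

theorem integral_exp_neg_sq_div (hσ : 0 < σ) :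
    ∫ x : ℝ, rexp (-(x ^ 2 / (2 * σ))) = √(2 * π * σ) := by
  have h := integral_gaussian (2 * σ)⁻¹
  rw [show π / (2 * σ)⁻¹ = 2 * π * σ by field_simp] at h
  rw [← h]
  congr 1 with x
  congr 1
  field_simp

theorem norm_setIntegral_Ioi_gaussFourierIntegrand_le (hσ : 0 < σ) {η a : ℝ} (hη : η ≠ 0)
    (ha : 0 ≤ a) :
    ‖∫ x in Ioi a, gaussFourierIntegrand σ η x‖ ≤ 2 * rexp (-(a ^ 2 / (2 * σ))) / |η| := by
  have hderiv (x : ℝ) : HasDerivAt (fun y => rexp (-(y ^ 2 / (2 * σ))))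
      (-(x / σ) * rexp (-(x ^ 2 / (2 * σ)))) x := by
    refine (((hasDerivAt_pow 2 x).div_const (2 * σ)).fun_neg.exp).congr_deriv ?_
    field_simp
    ring
  have hderiv_nonpos (x : ℝ) (hx : x ∈ Ioi a) : -(x / σ) * rexp (-(x ^ 2 / (2 * σ))) ≤ 0 :=
    mul_nonpos_of_nonpos_of_nonneg (neg_nonpos.mpr (div_nonneg (ha.trans hx.le) hσ.le))
      (Real.exp_pos _).le
  have hlim : Tendsto (fun y : ℝ => rexp (-(y ^ 2 / (2 * σ)))) atTop (𝓝 0) :=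
    Real.tendsto_exp_atBot.comp <| tendsto_neg_atTop_atBot.comp <|
      (tendsto_pow_atTop two_ne_zero).atTop_div_const (by positivity)
  have hint := (integrable_gaussFourierIntegrand hσ η).integrableOn (s := Ioi a)
  simp_rw [funext (gaussFourierIntegrand_eq σ η)] at hint ⊢
  simpa using norm_setIntegral_Ioi_mul_cexp_le (neg_ne_zero.mpr hη) (fun x _ => hderiv x)
    hderiv_nonpos hlim hint

theorem norm_setIntegral_Iic_gaussFourierIntegrand_le (hσ : 0 < σ) {η a : ℝ} (hη : η ≠ 0)
    (ha : 0 ≤ a) :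
    ‖∫ x in Iic (-a), gaussFourierIntegrand σ η x‖ ≤ 2 * rexp (-(a ^ 2 / (2 * σ))) / |η| := by
  rw [← integral_comp_neg_Ioi]
  simp_rw [gaussFourierIntegrand_neg]
  simpa using norm_setIntegral_Ioi_gaussFourierIntegrand_le hσ (neg_ne_zero.mpr hη) ha

noncomputable def truncGaussFourier (σ a η : ℝ) : ℂ :=
  ((√(2 * π * σ))⁻¹ : ℝ) * ∫ x in Icc (-a) a, gaussFourierIntegrand σ η x

theorem norm_truncGaussFourier_le_one (hσ : 0 < σ) (a η : ℝ) :
    ‖truncGaussFourier σ a η‖ ≤ 1 := by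
  have hint := integrable_gaussFourierIntegrand hσ η
  have hsqrt : 0 < √(2 * π * σ) := by positivity
  calc ‖truncGaussFourier σ a η‖
      ≤ (√(2 * π * σ))⁻¹ * ∫ x, ‖gaussFourierIntegrand σ η x‖ := by
        rw [truncGaussFourier, norm_mul, norm_real, Real.norm_of_nonneg (by positivity)]
        gcongr
        exact (norm_integral_le_integral_norm _).trans
          (setIntegral_le_integral hint.norm (.of_forall fun _ => norm_nonneg _))
    _ = 1 := by
        simp_rw [norm_gaussFourierIntegrand, integral_exp_neg_sq_div hσ]
        exact inv_mul_cancel₀ hsqrt.ne'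

theorem norm_truncGaussFourier_sub_le_two (hσ : 0 < σ) (a η : ℝ) :
    ‖truncGaussFourier σ a η - rexp (-(σ * η ^ 2 / 2))‖ ≤ 2 := by
  have hexp : rexp (-(σ * η ^ 2 / 2)) ≤ 1 := Real.exp_le_one_iff.mpr (by
    have : 0 ≤ σ * η ^ 2 := by positivity
    linarith)
  calc _ ≤ ‖truncGaussFourier σ a η‖ + ‖(rexp (-(σ * η ^ 2 / 2)) : ℂ)‖ := norm_sub_le _ _
    _ ≤ 1 + 1 := by
        gcongr
        · exact norm_truncGaussFourier_le_one hσ a η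
        · rwa [norm_real, Real.norm_of_nonneg (Real.exp_pos _).le]
    _ = 2 := by norm_num

theorem truncGaussFourier_sub_exp (hσ : 0 < σ) {a : ℝ} (ha : 0 ≤ a) (η : ℝ) :
    truncGaussFourier σ a η - rexp (-(σ * η ^ 2 / 2))
      = -(((√(2 * π * σ))⁻¹ : ℝ) * ((∫ x in Iic (-a), gaussFourierIntegrand σ η x)
          + ∫ x in Ioi a, gaussFourierIntegrand σ η x)) := by
  have hsqrt : (√(2 * π * σ) : ℂ) ≠ 0 := ofReal_ne_zero.mpr (by positivity)
  rw [neg_mul_eq_mul_neg,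
    ← setIntegral_Icc_sub_integral (integrable_gaussFourierIntegrand hσ η) (by linarith),
    integral_gaussFourierIntegrand hσ, truncGaussFourier]
  push_cast
  field_simp

theorem norm_truncGaussFourier_sub_le_tail (hσ : 0 < σ) {a η : ℝ} (hη : η ≠ 0) (ha : 0 ≤ a) :
    ‖truncGaussFourier σ a η - rexp (-(σ * η ^ 2 / 2))‖
      ≤ 4 * (|η|⁻¹ * (√σ)⁻¹ * rexp (-(a ^ 2 / (2 * σ)))) := by
  rw [truncGaussFourier_sub_exp hσ ha, norm_neg, norm_mul, norm_real,
    Real.norm_of_nonneg (by positivity)]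
  have hsqrt : (√(2 * π * σ))⁻¹ ≤ (√σ)⁻¹ :=
    inv_anti₀ (by positivity) (Real.sqrt_le_sqrt (by nlinarith [Real.pi_gt_three]))
  calc _ ≤ (√σ)⁻¹ *
        (2 * rexp (-(a ^ 2 / (2 * σ))) / |η| + 2 * rexp (-(a ^ 2 / (2 * σ))) / |η|) := by
        gcongr
        exact (norm_add_le _ _).trans
          (add_le_add (norm_setIntegral_Iic_gaussFourierIntegrand_le hσ hη ha)
            (norm_setIntegral_Ioi_gaussFourierIntegrand_le hσ hη ha))
    _ = _ := by ring

end

/-- Estimate for the Fourier transform of the truncated heat kernel: there is a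
constant `C` such that for all `0 < s < t`, `η ≠ 0`, `β ≥ 1` and `θ ∈ [0,1]`,
`|ρ^{(β)}(s,t;η) - e^{-(t-s)η²/2}| ≤ C |η|^{-θ} (t-s)^{-θ/2} e^{-β²θ/2}`, where
`ρ^{(β)}(s,t;η) = (2π(t-s))^{-1/2} ∫_{-β√t}^{β√t} e^{-ixη - x²/(2(t-s))} dx`. -/
theorem stmt15 :
    ∃ C : ℝ, 0 < C ∧ ∀ (s t η β θ : ℝ), 0 < s → s < t → η ≠ 0 → 1 ≤ β →
      θ ∈ Set.Icc (0 : ℝ) 1 →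
      ‖(((Real.sqrt (2 * Real.pi * (t - s)))⁻¹ : ℝ) : ℂ) *
          (∫ x in Set.Icc (-(β * Real.sqrt t)) (β * Real.sqrt t),
            Complex.exp (-(Complex.I * (x : ℂ) * (η : ℂ)) - (x : ℂ) ^ 2 / (2 * (t - s))))
        - ((Real.exp (-((t - s) * η ^ 2 / 2)) : ℝ) : ℂ)‖
      ≤ C * |η| ^ (-θ) * (t - s) ^ (-θ / 2) * Real.exp (-β ^ 2 * θ / 2) := by
  refine ⟨4, by norm_num, fun s t η β θ hs hst hη hβ hθ => ?_⟩
  have hσ : 0 < t - s := sub_pos.mpr hst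
  have ha : 0 ≤ β * √t := mul_nonneg (by linarith) (Real.sqrt_nonneg t)
  have hexp : rexp (-((β * √t) ^ 2 / (2 * (t - s)))) ≤ rexp (-(β ^ 2 / 2)) := by
    rw [mul_pow, Real.sq_sqrt (by linarith), Real.exp_le_exp, neg_le_neg_iff,
      div_le_div_iff₀ two_pos (by positivity)]
    nlinarith [sq_nonneg β]
  have hXθ : (|η|⁻¹ * (√(t - s))⁻¹ * rexp (-(β ^ 2 / 2))) ^ θ
      = |η| ^ (-θ) * (t - s) ^ (-θ / 2) * rexp (-β ^ 2 * θ / 2) := by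
    rw [Real.mul_rpow (by positivity) (by positivity),
      Real.mul_rpow (by positivity) (by positivity), Real.inv_rpow (abs_nonneg η), ← Real.rpow_neg (abs_nonneg η), Real.sqrt_eq_rpow,
      ← Real.rpow_neg hσ.le, ← Real.rpow_mul hσ.le, ← Real.exp_mul]
    ring_nf
  calc _ = ‖truncGaussFourier (t - s) (β * √t) η - rexp (-((t - s) * η ^ 2 / 2))‖ := by
        simp only [truncGaussFourier, gaussFourierIntegrand, ofReal_sub]
    _ ≤ 4 * (|η|⁻¹ * (√(t - s))⁻¹ * rexp (-(β ^ 2 / 2))) ^ θ := by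
        refine le_mul_rpow_of_le_of_le_mul (by norm_num) (by positivity)
          ((norm_truncGaussFourier_sub_le_two hσ _ _).trans (by norm_num))
          ((norm_truncGaussFourier_sub_le_tail hσ hη ha).trans ?_) hθ
        gcongr
    _ = _ := by rw [hXθ]; ring
end
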